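/- (From estimation error to regret.) Consider the sparse linear contextual bandit under the boundedness assumption, and fix τ ∈ ℕ₀, δ ∈ (0,1], α > 0, and Δ* > 0. Suppose that for every round t ≥ τ + 1 the arm is chosen greedily, a_t = argmax_k x_{t,k}ᵀβ̂_{t−1}, and that (Δ̄_t)_{t≥0} is a non-increasing sequence of real numbers with 2·x_max·‖β* − β̂_t‖₁ ≤ Δ̄_t for all t ≥ τ. If in addition, for every t' ≥ 1, Σ_{i=τ+1}^{τ+t'} 1{a_i ≠ a_i*} ≤ (5/4)·Σ_{i=τ+1}^{τ+t'} min{1, ((2·x_max/Δ*)·‖β* − β̂_{i−1}‖₁)^α} + 4·log(1/δ), then for every T ≥ τ + 1, Σ_{t=τ+1}^T reg_t ≤ 4·Δ̄_τ·log(1/δ) + (5/4)·Σ_{t=τ}^{T−1} Δ̄_t·min{1, (Δ̄_t/Δ*)^α}. -/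

import Mathlib

set_option autoImplicit false

open MeasureTheory ProbabilityTheory Matrix Finset
open scoped Classical ENNReal

noncomputable section

namespace Paper

/-- The ℓ¹ norm of a vector. -/
def l1 {ι : Type*} [Fintype ι] (v : ι → ℝ) : ℝ := ∑ j, |v j|

lemma l1_nonneg {ι : Type*} [Fintype ι] (v : ι → ℝ) : 0 ≤ l1 v :=
  Finset.sum_nonneg fun j _ => abs_nonneg _

/-- Abel-type comparison core. -/
lemma abel_aux (w D : ℕ → ℝ) (hw : ∀ i, 0 ≤ w i) (hmono : ∀ i, w (i + 1) ≤ w i)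
    (hD : ∀ i, 0 ≤ D i) (n : ℕ) :
    w n * D n ≤ (∑ i ∈ Finset.range n, w i * (D (i + 1) - D i)) + w 0 * D 0 := by
  induction n with
  | zero => simp
  | succ n ih =>
    rw [Finset.sum_range_succ]
    have h1 : w (n + 1) * D (n + 1) ≤ w n * D (n + 1) :=
      mul_le_mul_of_nonneg_right (hmono n) (hD _)
    have e : w n * D (n + 1) = w n * (D (n + 1) - D n) + w n * D n := by ring
    linarith

/-- **Lemma (from estimation error to regret)**: if the arms are chosen greedily from round
`τ + 1` on, the estimation errors are dominated by a non-increasing sequence `Δ̄`, and the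
number of sub-optimal selections satisfies the `E_N(τ)` bound, then the cumulative regret from
round `τ + 1` to `T` is at most
`4 Δ̄_τ log(1/δ) + (5/4) Σ_{t=τ}^{T−1} Δ̄_t min{1, (Δ̄_t/Δ*)^α}`. -/
theorem estimation_error_to_regret {d K : ℕ}
    (x : ℕ → Fin K → Fin d → ℝ) (act astar : ℕ → Fin K)
    (βstar : Fin d → ℝ) (βhat : ℕ → Fin d → ℝ)
    (xmax : ℝ) (hxmax : 0 < xmax) (hbdd : ∀ t k j, |x t k j| ≤ xmax)
    (hastar : ∀ t k, x t k ⬝ᵥ βstar ≤ x t (astar t) ⬝ᵥ βstar)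
    (τ : ℕ) (δ α Δstar : ℝ) (hδ : 0 < δ) (hδ1 : δ ≤ 1) (hα : 0 < α) (hΔstar : 0 < Δstar)
    (Δbar : ℕ → ℝ) (hmono : ∀ s t : ℕ, s ≤ t → Δbar t ≤ Δbar s)
    (hΔbar : ∀ t, τ ≤ t → 2 * xmax * l1 (βstar - βhat t) ≤ Δbar t)
    (hgreedy : ∀ t, τ + 1 ≤ t → ∀ k, x t k ⬝ᵥ βhat (t - 1) ≤ x t (act t) ⬝ᵥ βhat (t - 1))
    (hN : ∀ t' : ℕ, 1 ≤ t' →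
      (∑ i ∈ Finset.Icc (τ + 1) (τ + t'), if act i ≠ astar i then (1 : ℝ) else 0) ≤
        5 / 4 * ∑ i ∈ Finset.Icc (τ + 1) (τ + t'),
            min 1 ((2 * xmax / Δstar * l1 (βstar - βhat (i - 1))) ^ α) +
          4 * Real.log (1 / δ))
    (T : ℕ) (hT : τ + 1 ≤ T) :
    ∑ t ∈ Finset.Icc (τ + 1) T, (x t (astar t) ⬝ᵥ βstar - x t (act t) ⬝ᵥ βstar) ≤
      4 * Δbar τ * Real.log (1 / δ) +
        5 / 4 * ∑ t ∈ Finset.Icc τ (T - 1), Δbar t * min 1 ((Δbar t / Δstar) ^ α) := by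
  -- notation
  set u : ℕ → ℝ := fun t => l1 (βstar - βhat t) with hu
  have hu0 : ∀ t, 0 ≤ u t := fun t => l1_nonneg _
  have hΔ0 : ∀ t, τ ≤ t → 0 ≤ Δbar t := fun t ht =>
    le_trans (mul_nonneg (by positivity) (l1_nonneg _)) (hΔbar t ht)
  have hlog : 0 ≤ Real.log (1 / δ) :=
    Real.log_nonneg (one_le_one_div hδ hδ1)
  set ind : ℕ → ℝ := fun i => if act i ≠ astar i then (1 : ℝ) else 0 with hind
  set c : ℕ → ℝ := fun i => min 1 ((2 * xmax / Δstar * u (i - 1)) ^ α) with hc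
  set F : ℕ → ℝ := fun m => ∑ i ∈ Finset.Icc (τ + 1) (τ + m), ind i with hF
  set G : ℕ → ℝ := fun m =>
    5 / 4 * ∑ i ∈ Finset.Icc (τ + 1) (τ + m), c i + 4 * Real.log (1 / δ) with hG
  set w : ℕ → ℝ := fun i => Δbar (τ + i) with hw
  set D : ℕ → ℝ := fun m => G m - F m with hD
  have hwnn : ∀ i, 0 ≤ w i := fun i => hΔ0 _ (Nat.le_add_right _ _)
  have hwmono : ∀ i, w (i + 1) ≤ w i := fun i => hmono _ _ (by omega)
  have hDnn : ∀ m, 0 ≤ D m := by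
    intro m
    rcases Nat.eq_zero_or_pos m with hm | hm
    · subst hm
      have : Finset.Icc (τ + 1) (τ + 0) = ∅ := by
        apply Finset.Icc_eq_empty; omega
      simp only [hD, hG, hF, this, Finset.sum_empty, mul_zero, zero_add, sub_zero]
      positivity
    · have := hN m hm
      simp only [hD, hG, hF]
      linarith [this]
  -- difference formulas
  have hFd : ∀ m, F (m + 1) - F m = ind (τ + m + 1) := by
    intro m
    have : τ + (m + 1) = (τ + m) + 1 := by ring
    simp only [hF, this, Finset.sum_Icc_succ_top (by omega : τ + 1 ≤ τ + m + 1)]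
    ring
  have hGd : ∀ m, G (m + 1) - G m = 5 / 4 * c (τ + m + 1) := by
    intro m
    have : τ + (m + 1) = (τ + m) + 1 := by ring
    simp only [hG, this, Finset.sum_Icc_succ_top (by omega : τ + 1 ≤ τ + m + 1)]
    ring
  -- per round regret bound
  have hreg : ∀ t, τ + 1 ≤ t →
      x t (astar t) ⬝ᵥ βstar - x t (act t) ⬝ᵥ βstar ≤ Δbar (t - 1) * ind t := by
    intro t ht
    by_cases he : act t = astar t
    · simp [hind, he, le_refl]
    · have hind1 : ind t = 1 := by simp [hind, he]
      rw [hind1, mul_one]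
      have hg : x t (astar t) ⬝ᵥ βhat (t - 1) ≤ x t (act t) ⬝ᵥ βhat (t - 1) :=
        hgreedy t ht (astar t)
      have key : x t (astar t) ⬝ᵥ βstar - x t (act t) ⬝ᵥ βstar ≤
          (fun j => x t (astar t) j - x t (act t) j) ⬝ᵥ (βstar - βhat (t - 1)) := by
        simp only [dotProduct, Pi.sub_apply]
        have : ∑ j, (x t (astar t) j - x t (act t) j) * (βstar j - βhat (t - 1) j)
            = (∑ j, x t (astar t) j * βstar j - ∑ j, x t (act t) j * βstar j)
              + (∑ j, x t (act t) j * βhat (t - 1) j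
                - ∑ j, x t (astar t) j * βhat (t - 1) j) := by
          rw [← Finset.sum_sub_distrib, ← Finset.sum_sub_distrib, ← Finset.sum_add_distrib]
          apply Finset.sum_congr rfl
          intro j _; ring
        rw [this]
        have hg' : 0 ≤ ∑ j, x t (act t) j * βhat (t - 1) j
            - ∑ j, x t (astar t) j * βhat (t - 1) j := by
          have := hg; simp only [dotProduct] at this; linarith
        linarith
      have hdot : (fun j => x t (astar t) j - x t (act t) j) ⬝ᵥ (βstar - βhat (t - 1)) ≤
          2 * xmax * l1 (βstar - βhat (t - 1)) := by
        simp only [dotProduct, Pi.sub_apply, l1, Finset.mul_sum]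
        apply Finset.sum_le_sum
        intro j _
        have h1 : (x t (astar t) j - x t (act t) j) * (βstar j - βhat (t - 1) j)
            ≤ |x t (astar t) j - x t (act t) j| * |βstar j - βhat (t - 1) j| := by
          rw [← abs_mul]; exact le_abs_self _
        have h2 : |x t (astar t) j - x t (act t) j| ≤ 2 * xmax := by
          have := hbdd t (astar t) j
          have := hbdd t (act t) j
          have := abs_sub (x t (astar t) j) (x t (act t) j)
          calc |x t (astar t) j - x t (act t) j|
              ≤ |x t (astar t) j| + |x t (act t) j| := abs_sub _ _
            _ ≤ 2 * xmax := by linarith [hbdd t (astar t) j, hbdd t (act t) j]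
        calc (x t (astar t) j - x t (act t) j) * (βstar j - βhat (t - 1) j)
            ≤ |x t (astar t) j - x t (act t) j| * |βstar j - βhat (t - 1) j| := h1
          _ ≤ 2 * xmax * |βstar j - βhat (t - 1) j| :=
              mul_le_mul_of_nonneg_right h2 (abs_nonneg _)
      refine le_trans key (le_trans hdot ?_)
      exact hΔbar (t - 1) (by omega)
  -- per-t min bound
  have hcmin : ∀ t, τ ≤ t →
      Δbar t * min 1 ((2 * xmax / Δstar * u t) ^ α) ≤
        Δbar t * min 1 ((Δbar t / Δstar) ^ α) := by
    intro t ht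
    apply mul_le_mul_of_nonneg_left _ (hΔ0 t ht)
    apply min_le_min le_rfl
    apply Real.rpow_le_rpow (mul_nonneg (by positivity) (hu0 t)) _ hα.le
    rw [div_mul_eq_mul_div, div_le_div_iff_of_pos_right hΔstar]
    exact hΔbar t ht
  -- main chain
  set n := T - τ with hn
  have hn1 : 1 ≤ n := by omega
  have hTn : T = τ + n := by omega
  -- LHS ≤ ∑_{i<n} w i * (F (i+1) - F i)
  have step1 : ∑ t ∈ Finset.Icc (τ + 1) T, (x t (astar t) ⬝ᵥ βstar - x t (act t) ⬝ᵥ βstar) ≤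
      ∑ i ∈ Finset.range n, w i * (F (i + 1) - F i) := by
    have h1 : ∑ t ∈ Finset.Icc (τ + 1) T, (x t (astar t) ⬝ᵥ βstar - x t (act t) ⬝ᵥ βstar) ≤
        ∑ t ∈ Finset.Icc (τ + 1) T, Δbar (t - 1) * ind t := by
      apply Finset.sum_le_sum
      intro t ht
      rw [Finset.mem_Icc] at ht
      exact hreg t ht.1
    refine le_trans h1 (le_of_eq ?_)
    rw [← Finset.Ico_add_one_right_eq_Icc, Finset.sum_Ico_eq_sum_range]
    have hcard : T + 1 - (τ + 1) = n := by omega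
    rw [hcard]
    apply Finset.sum_congr rfl
    intro i _
    have e0 : τ + 1 + i - 1 = τ + i := by omega
    have e1 : τ + 1 + i = τ + i + 1 := by omega
    rw [hFd i, e0, e1]
  have step2 : ∑ i ∈ Finset.range n, w i * (F (i + 1) - F i) ≤
      ∑ i ∈ Finset.range n, w i * (G (i + 1) - G i) + w 0 * D 0 := by
    have habel := abel_aux w D hwnn hwmono hDnn n
    have hpos : 0 ≤ w n * D n := mul_nonneg (hwnn n) (hDnn n)
    have hsplit : ∀ i, w i * (D (i + 1) - D i)
        = w i * (G (i + 1) - G i) - w i * (F (i + 1) - F i) := by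
      intro i; simp only [hD]; ring
    rw [Finset.sum_congr rfl (fun i _ => hsplit i), Finset.sum_sub_distrib] at habel
    linarith
  have hD0 : w 0 * D 0 = Δbar τ * (4 * Real.log (1 / δ)) := by
    have he : Finset.Icc (τ + 1) τ = ∅ := Finset.Icc_eq_empty (by omega)
    simp only [hD, hG, hF, hw, Nat.add_zero, he, Finset.sum_empty, mul_zero, zero_add,
      sub_zero]
  have step3 : ∑ i ∈ Finset.range n, w i * (G (i + 1) - G i) ≤
      5 / 4 * ∑ t ∈ Finset.Icc τ (T - 1), Δbar t * min 1 ((Δbar t / Δstar) ^ α) := by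
    have hrw : ∑ t ∈ Finset.Icc τ (T - 1), Δbar t * min 1 ((Δbar t / Δstar) ^ α)
        = ∑ i ∈ Finset.range n, Δbar (τ + i) * min 1 ((Δbar (τ + i) / Δstar) ^ α) := by
      rw [← Finset.Ico_add_one_right_eq_Icc, Finset.sum_Ico_eq_sum_range]
      have : T - 1 + 1 - τ = n := by omega
      rw [this]
    rw [hrw, Finset.mul_sum]
    apply Finset.sum_le_sum
    intro i _
    rw [hGd i]
    have hct : c (τ + i + 1) = min 1 ((2 * xmax / Δstar * u (τ + i)) ^ α) := by
      simp only [hc, Nat.add_sub_cancel]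
    rw [hct]
    have := hcmin (τ + i) (Nat.le_add_right _ _)
    calc w i * (5 / 4 * min 1 ((2 * xmax / Δstar * u (τ + i)) ^ α))
        = 5 / 4 * (Δbar (τ + i) * min 1 ((2 * xmax / Δstar * u (τ + i)) ^ α)) := by
          simp only [hw]; ring
      _ ≤ 5 / 4 * (Δbar (τ + i) * min 1 ((Δbar (τ + i) / Δstar) ^ α)) := by linarith
  calc ∑ t ∈ Finset.Icc (τ + 1) T, (x t (astar t) ⬝ᵥ βstar - x t (act t) ⬝ᵥ βstar)
      ≤ ∑ i ∈ Finset.range n, w i * (F (i + 1) - F i) := step1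
    _ ≤ ∑ i ∈ Finset.range n, w i * (G (i + 1) - G i) + w 0 * D 0 := step2
    _ ≤ 5 / 4 * ∑ t ∈ Finset.Icc τ (T - 1), Δbar t * min 1 ((Δbar t / Δstar) ^ α)
        + Δbar τ * (4 * Real.log (1 / δ)) := by rw [hD0]; exact add_le_add_left step3 _
    _ = 4 * Δbar τ * Real.log (1 / δ)
        + 5 / 4 * ∑ t ∈ Finset.Icc τ (T - 1), Δbar t * min 1 ((Δbar t / Δstar) ^ α) := by ring

end Paper
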